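/- For any bipartition (ρ;σ) of n, there exists a unique special bipartition (ρ;σ)° ∈ Q_n° such that (ρ;σ) ≤ (ρ;σ)° and (ρ;σ)° ≤ (τ;υ) for every special bipartition (τ;υ) with (ρ;σ) ≤ (τ;υ). Moreover (ρ;σ)° can be constructed explicitly: whenever ρ_i < σ_i − 1, replace ρ_i, σ_i by ⌊(ρ_i+σ_i)/2⌋, ⌈(ρ_i+σ_i)/2⌉; whenever σ_i < ρ_{i+1}, replace σ_i, ρ_{i+1} by ⌈(σ_i+ρ_{i+1})/2⌉, ⌊(σ_i+ρ_{i+1})/2⌋. -/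

import Mathlib

open Finset

/-- Partial sum of the first `k` terms of a sequence of naturals. -/
def psum (π : ℕ → ℕ) (k : ℕ) : ℕ := ∑ i ∈ Finset.range k, π i

/-- A composition of `n`: almost all terms zero, summing to `n`. -/
def IsComposition (n : ℕ) (π : ℕ → ℕ) : Prop :=
  ∃ N, (∀ i, N ≤ i → π i = 0) ∧ psum π N = n

/-- Dominance order: `l` dominates `π`. -/
def Dominates (l π : ℕ → ℕ) : Prop := ∀ k, psum π k ≤ psum l k

/-- A partition: weakly decreasing sequence. -/
def IsPartition (π : ℕ → ℕ) : Prop := ∀ i, π (i + 1) ≤ π i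

/-- A quasi-partition: `π i ≥ π (i+2)` for all `i`. -/
def IsQuasiPartition (π : ℕ → ℕ) : Prop := ∀ i, π (i + 2) ≤ π i

/-- Interleaving of two sequences: `(ρ₁, σ₁, ρ₂, σ₂, …)` (0-indexed). -/
def interleave (ρ σ : ℕ → ℕ) (i : ℕ) : ℕ :=
  if i % 2 = 0 then ρ (i / 2) else σ (i / 2)

/-- A bipartition of `n`: a pair of partitions whose interleaving sums to `n`. -/
def IsBipartition (n : ℕ) (ρ σ : ℕ → ℕ) : Prop :=
  IsPartition ρ ∧ IsPartition σ ∧ IsComposition n (interleave ρ σ)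

/-- Interleaved dominance order on bipartitions: `(ρ;σ) ≤ (μ;ν)`. -/
def BiLE (ρ σ μ ν : ℕ → ℕ) : Prop :=
  Dominates (interleave μ ν) (interleave ρ σ)

/-- The map `Φ^C` on sequences: replace a consecutive pair `2s < 2t`
by `s+t, s+t` (pointwise description; replacements never overlap for
quasi-partitions). -/
def phiC (π : ℕ → ℕ) : ℕ → ℕ
  | 0 => if π 0 < π 1 then (π 0 + π 1) / 2 else π 0
  | (j + 1) =>
      if π (j + 1) < π (j + 2) then (π (j + 1) + π (j + 2)) / 2
      else if π j < π (j + 1) then (π j + π (j + 1)) / 2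
      else π (j + 1)

/-- `Φ^C` of a bipartition: apply `phiC` to the doubled interleaving. -/
def PhiC (ρ σ : ℕ → ℕ) : ℕ → ℕ := phiC (fun i => 2 * interleave ρ σ i)

/-- Membership in `P^C_{2n}`: partition of `2n` with every odd part of even
multiplicity. -/
def IsPC (n : ℕ) (l : ℕ → ℕ) : Prop :=
  IsPartition l ∧ IsComposition (2 * n) l ∧
    ∀ a : ℕ, Odd a → Even ({i | l i = a}.ncard)

/-- C-distinguished: `μ i ≥ ν i - 1` and `ν i ≥ μ (i+1) - 1`. -/
def QC (μ ν : ℕ → ℕ) : Prop :=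
  ∀ i, ν i ≤ μ i + 1 ∧ μ (i + 1) ≤ ν i + 1

/-- B-distinguished: `μ i ≥ ν i - 2` and `ν i ≥ μ (i+1)`. -/
def QB (μ ν : ℕ → ℕ) : Prop :=
  ∀ i, ν i ≤ μ i + 2 ∧ μ (i + 1) ≤ ν i

/-- Special: `μ i ≥ ν i - 1` and `ν i ≥ μ (i+1)`. -/
def QS (μ ν : ℕ → ℕ) : Prop :=
  ∀ i, ν i ≤ μ i + 1 ∧ μ (i + 1) ≤ ν i

/-- The condition defining `Q_n^{B,2}`: `μ i ≥ ν i - 2`. -/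
def QB2 (μ ν : ℕ → ℕ) : Prop := ∀ i, ν i ≤ μ i + 2

/-- For an antitone sequence, the starting index of the run of equal values
containing index `i`. -/
noncomputable def runStart (l : ℕ → ℕ) (i : ℕ) : ℕ := {j | l i < l j}.ncard

/-- The map `Φ̂^C`, pointwise: halve even parts; replace an (even-length)
maximal run of an odd part `2k+1` with `k, k+1, k, k+1, …`. -/
noncomputable def hphiC (l : ℕ → ℕ) (i : ℕ) : ℕ :=
  if Even (l i) then l i / 2
  else if Even (i - runStart l i) then l i / 2 else l i / 2 + 1

/-- Partial sums of an integer sequence. -/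
def zsum (π : ℕ → ℤ) (k : ℕ) : ℤ := ∑ i ∈ Finset.range k, π i

/-- Dominance order on integer sequences. -/
def ZDominates (l π : ℕ → ℤ) : Prop := ∀ k, zsum π k ≤ zsum l k

/-- The interleaved integer sequence `(2ρ₁+1, 2σ₁−1, 2ρ₂+1, 2σ₂−1, …)`. -/
def interB (ρ σ : ℕ → ℕ) (i : ℕ) : ℤ :=
  if i % 2 = 0 then 2 * (ρ (i / 2) : ℤ) + 1 else 2 * (σ (i / 2) : ℤ) - 1

/-- The map `Φ^B` on integer sequences: replace a consecutive pair `s < t`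
by `(s+t)/2, (s+t)/2` (pointwise description). -/
def phiB (π : ℕ → ℤ) : ℕ → ℤ
  | 0 => if π 0 < π 1 then (π 0 + π 1) / 2 else π 0
  | (j + 1) =>
      if π (j + 1) < π (j + 2) then (π (j + 1) + π (j + 2)) / 2
      else if π j < π (j + 1) then (π j + π (j + 1)) / 2
      else π (j + 1)

/-- `Φ^B` of a bipartition. -/
def PhiB (ρ σ : ℕ → ℕ) : ℕ → ℤ := phiB (interB ρ σ)

/-- Membership in `P^B_{2n+1}` for an integer sequence: nonnegative, weakly
decreasing, summing to `2n+1`, with every (positive) even part of even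
multiplicity. -/
def IsPB (n : ℕ) (l : ℕ → ℤ) : Prop :=
  (∀ i, 0 ≤ l i) ∧ (∀ i, l (i + 1) ≤ l i) ∧
  (∃ N, (∀ i, N ≤ i → l i = 0) ∧ zsum l N = 2 * n + 1) ∧
  ∀ a : ℤ, 0 < a → Even a → Even ({i | l i = a}.ncard)

/-- Membership in `P^B_{2n+1}` for a natural-number partition. -/
def IsPBN (n : ℕ) (l : ℕ → ℕ) : Prop :=
  IsPartition l ∧ IsComposition (2 * n + 1) l ∧
    ∀ a : ℕ, 0 < a → Even a → Even ({i | l i = a}.ncard)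

/-- The map `Φ̂^B`, pointwise (0-indexed, so the paper's index `i` is `j+1`):
an odd part `λ_i` becomes `(λ_i + (−1)^i)/2`; a maximal run of an even part
`2k` starting at (0-indexed) position `s` becomes `k, k, …` if `s` is odd
(paper's `i` even) and `k−1, k+1, k−1, k+1, …` if `s` is even (paper's `i`
odd). -/
noncomputable def hphiB (l : ℕ → ℕ) (j : ℕ) : ℕ :=
  if Odd (l j) then (if Even j then (l j - 1) / 2 else (l j + 1) / 2)
  else
    if Odd (runStart l j) then l j / 2
    else if Even (j - runStart l j) then l j / 2 - 1 else l j / 2 + 1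

/-- First component of the special closure `(ρ;σ)°`. -/
def scRho (ρ σ : ℕ → ℕ) : ℕ → ℕ
  | 0 => if ρ 0 + 1 < σ 0 then (ρ 0 + σ 0) / 2 else ρ 0
  | (i + 1) =>
      if ρ (i + 1) + 1 < σ (i + 1) then (ρ (i + 1) + σ (i + 1)) / 2
      else if σ i < ρ (i + 1) then (σ i + ρ (i + 1)) / 2
      else ρ (i + 1)

/-- Second component of the special closure `(ρ;σ)°`. -/
def scSigma (ρ σ : ℕ → ℕ) (i : ℕ) : ℕ :=
  if ρ i + 1 < σ i then (ρ i + σ i + 1) / 2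
  else if σ i < ρ (i + 1) then (σ i + ρ (i + 1) + 1) / 2
  else σ i

/-- First component of the closure `(ρ;σ)~` into `Q_n^{B,2}`. -/
def tRho (ρ σ : ℕ → ℕ) (i : ℕ) : ℕ :=
  if ρ i + 2 < σ i then (ρ i + σ i + 1) / 2 - 1 else ρ i

/-- Second component of the closure `(ρ;σ)~` into `Q_n^{B,2}`. -/
def tSigma (ρ σ : ℕ → ℕ) (i : ℕ) : ℕ :=
  if ρ i + 2 < σ i then (ρ i + σ i) / 2 + 1 else σ i

/-- First component of the closure `(ρ;σ)^B` into `Q_n^B`. -/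
def bRho (ρ σ : ℕ → ℕ) : ℕ → ℕ
  | 0 => if ρ 0 + 2 < σ 0 then (ρ 0 + σ 0 + 1) / 2 - 1 else ρ 0
  | (i + 1) =>
      if ρ (i + 1) + 2 < σ (i + 1) then (ρ (i + 1) + σ (i + 1) + 1) / 2 - 1
      else if σ i < ρ (i + 1) then (σ i + ρ (i + 1)) / 2
      else ρ (i + 1)

/-- Second component of the closure `(ρ;σ)^B` into `Q_n^B`. -/
def bSigma (ρ σ : ℕ → ℕ) (i : ℕ) : ℕ :=
  if ρ i + 2 < σ i then (ρ i + σ i) / 2 + 1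
  else if σ i < ρ (i + 1) then (σ i + ρ (i + 1) + 1) / 2
  else σ i

/-- First component of the closure `(ρ;σ)^C` into `Q_n^C`. -/
def cRho (ρ σ : ℕ → ℕ) : ℕ → ℕ
  | 0 => if ρ 0 + 1 < σ 0 then (ρ 0 + σ 0) / 2 else ρ 0
  | (i + 1) =>
      if ρ (i + 1) + 1 < σ (i + 1) then (ρ (i + 1) + σ (i + 1)) / 2
      else if σ i + 1 < ρ (i + 1) then (σ i + ρ (i + 1) + 1) / 2
      else ρ (i + 1)

/-- Second component of the closure `(ρ;σ)^C` into `Q_n^C`. -/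
def cSigma (ρ σ : ℕ → ℕ) (i : ℕ) : ℕ :=
  if ρ i + 1 < σ i then (ρ i + σ i + 1) / 2
  else if σ i + 1 < ρ (i + 1) then (σ i + ρ (i + 1)) / 2
  else σ i

/-!
Read everything on the interleaved sequence `π = (ρ₁, σ₁, ρ₂, σ₂, …)`. Since `ρ` and `σ` are
partitions, `π` is a quasi-partition, and `(μ;ν)` is special exactly when its interleaving `θ`
satisfies the local condition `θ (j+1) ≤ θ j + [j even]`. In a quasi-partition the adjacent
pairs violating this condition are disjoint, and averaging each of them (rounding down at the
`ρ`-positions, up at the `σ`-positions) repairs them without creating new violations. This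
changes only the partial sum ending between the two entries of a repaired pair, and raises it
to the least value that the local condition allows once the neighbouring partial sums are
fixed. Any special `θ` dominating `π` therefore also dominates its repair, which is thus the
minimum; uniqueness is antisymmetry of dominance.
-/

lemma psum_succ (f : ℕ → ℕ) (k : ℕ) : psum f (k + 1) = psum f k + f k :=
  Finset.sum_range_succ f k

lemma Dominates.antisymm {f g : ℕ → ℕ} (hfg : Dominates f g) (hgf : Dominates g f) : f = g := by
  funext k
  have h₁ := psum_succ f k
  have h₂ := psum_succ g k
  have := hfg k; have := hfg (k + 1); have := hgf k; have := hgf (k + 1)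
  omega

lemma interleave_two_mul (ρ σ : ℕ → ℕ) (i : ℕ) : interleave ρ σ (2 * i) = ρ i := by
  simp [interleave]

lemma interleave_two_mul_add_one (ρ σ : ℕ → ℕ) (i : ℕ) : interleave ρ σ (2 * i + 1) = σ i := by
  simp [interleave, Nat.add_mod, Nat.add_div]

lemma interleave_two_mul_add_two (ρ σ : ℕ → ℕ) (i : ℕ) :
    interleave ρ σ (2 * i + 2) = ρ (i + 1) := by
  rw [← interleave_two_mul ρ σ, mul_add_one]

lemma interleave_injective {ρ σ ρ' σ' : ℕ → ℕ} (h : interleave ρ σ = interleave ρ' σ') :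
    ρ = ρ' ∧ σ = σ' := by
  constructor <;> funext i
  · simpa only [interleave_two_mul] using congrFun h (2 * i)
  · simpa only [interleave_two_mul_add_one] using congrFun h (2 * i + 1)

/-- The slack `(j + 1) % 2` is `1` from a `ρ`-entry to the next `σ`-entry and `0` from a
`σ`-entry to the next `ρ`-entry of an interleaving. -/
def IsSpecialSeq (θ : ℕ → ℕ) : Prop := ∀ j, θ (j + 1) ≤ θ j + (j + 1) % 2

lemma isQuasiPartition_interleave_iff {ρ σ : ℕ → ℕ} :
    IsQuasiPartition (interleave ρ σ) ↔ IsPartition ρ ∧ IsPartition σ := by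
  have hσ (i : ℕ) : interleave ρ σ (2 * i + 1 + 2) = σ (i + 1) := by
    rw [show 2 * i + 1 + 2 = 2 * (i + 1) + 1 by ring, interleave_two_mul_add_one]
  constructor
  · intro h
    refine ⟨fun i => ?_, fun i => ?_⟩
    · simpa only [interleave_two_mul, interleave_two_mul_add_two] using h (2 * i)
    · simpa only [interleave_two_mul_add_one, hσ] using h (2 * i + 1)
  · rintro ⟨hρ, hσ'⟩ j
    obtain ⟨i, rfl | rfl⟩ := Nat.even_or_odd' j
    · simpa only [interleave_two_mul, interleave_two_mul_add_two] using hρ i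
    · simpa only [interleave_two_mul_add_one, hσ] using hσ' i

lemma isSpecialSeq_interleave_iff {μ ν : ℕ → ℕ} : IsSpecialSeq (interleave μ ν) ↔ QS μ ν := by
  have hρ (i : ℕ) : interleave μ ν (2 * i + 1 + 1) = μ (i + 1) := interleave_two_mul_add_two μ ν i
  have hodd (i : ℕ) : (2 * i + 1) % 2 = 1 := by omega
  have heven (i : ℕ) : (2 * i + 1 + 1) % 2 = 0 := by omega
  constructor
  · intro h i
    have hμν := h (2 * i)
    have hνμ := h (2 * i + 1)
    simp only [interleave_two_mul, interleave_two_mul_add_one, hρ, hodd, heven] at hμν hνμ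
    exact ⟨hμν, hνμ⟩
  · intro h j
    obtain ⟨i, rfl | rfl⟩ := Nat.even_or_odd' j
    · simpa only [interleave_two_mul, interleave_two_mul_add_one, hodd] using (h i).1
    · simpa only [interleave_two_mul_add_one, hρ, heven, add_zero] using (h i).2

section SpecialClose

/-- Averages every adjacent pair violating `IsSpecialSeq`; the entry at position `k` of a
repaired pair becomes `(sum of the pair + k % 2) / 2`. -/
def specialClose (π : ℕ → ℕ) : ℕ → ℕ
  | 0 => if π 0 + 1 < π 1 then (π 0 + π 1) / 2 else π 0
  | p + 1 =>
      if π (p + 1) + (p + 2) % 2 < π (p + 2) then (π (p + 1) + π (p + 2) + (p + 1) % 2) / 2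
      else if π p + (p + 1) % 2 < π (p + 1) then (π p + π (p + 1) + (p + 1) % 2) / 2
      else π (p + 1)

def specialExcess (π : ℕ → ℕ) : ℕ → ℕ
  | 0 => 0
  | p + 1 => if π p + (p + 1) % 2 < π (p + 1) then (π p + π (p + 1) + p % 2) / 2 - π p else 0

variable {π : ℕ → ℕ}

lemma specialClose_isSpecialSeq (hπ : IsQuasiPartition π) : IsSpecialSeq (specialClose π) := by
  intro j
  cases j with
  | zero =>
    have := hπ 0
    simp only [specialClose] at this ⊢
    norm_num at this ⊢
    split_ifs <;> omega
  | succ p =>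
    have := hπ p
    have := hπ (p + 1)
    simp only [specialClose, Nat.add_assoc] at *
    norm_num at *
    split_ifs <;> omega

lemma specialClose_isQuasiPartition (hπ : IsQuasiPartition π) :
    IsQuasiPartition (specialClose π) := by
  intro j
  cases j with
  | zero =>
    have := hπ 0
    have := hπ 1
    simp only [specialClose] at *
    norm_num at *
    split_ifs <;> omega
  | succ p =>
    have := hπ p
    have := hπ (p + 1)
    have := hπ (p + 2)
    simp only [specialClose, Nat.add_assoc] at *
    norm_num at *
    split_ifs <;> omega

lemma psum_specialClose (hπ : IsQuasiPartition π) (k : ℕ) :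
    psum (specialClose π) k = psum π k + specialExcess π k := by
  induction k with
  | zero => rfl
  | succ k ih =>
    rw [psum_succ, psum_succ, ih]
    suffices specialExcess π k + specialClose π k = π k + specialExcess π (k + 1) by omega
    cases k with
    | zero =>
      simp only [specialExcess, specialClose]
      norm_num
      split_ifs <;> omega
    | succ p =>
      have := hπ p
      simp only [specialExcess, specialClose, Nat.add_assoc] at *
      norm_num at *
      split_ifs <;> omega

lemma specialClose_dominates (hπ : IsQuasiPartition π) : Dominates (specialClose π) π := fun k =>
  (psum_specialClose hπ k).symm ▸ Nat.le_add_right _ _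

/-- A repaired pair at positions `p, p + 1` raises the partial sum up to `p + 1` to
`⌈(psum π p + psum π (p + 2) - (p + 1) % 2) / 2⌉`, the least value the constraints
`psum θ p ≥ psum π p`, `psum θ (p + 2) ≥ psum π (p + 2)` and `θ (p + 1) ≤ θ p + (p + 1) % 2`
leave for `psum θ (p + 1)`. -/
lemma dominates_specialClose_of_dominates (hπ : IsQuasiPartition π) {θ : ℕ → ℕ} (hθ : IsSpecialSeq θ)
    (hθπ : Dominates θ π) : Dominates θ (specialClose π) := by
  intro k
  rw [psum_specialClose hπ]
  cases k with
  | zero => simpa only [specialExcess, add_zero] using hθπ 0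
  | succ p =>
    simp only [specialExcess]
    split_ifs
    · have := hθπ p
      have := hθπ (p + 1 + 1)
      have := hθ p
      have := psum_succ π p; have := psum_succ π (p + 1)
      have := psum_succ θ p; have := psum_succ θ (p + 1)
      omega
    · exact hθπ (p + 1)

lemma isComposition_specialClose {n : ℕ} (hπ : IsQuasiPartition π) (hn : IsComposition n π) :
    IsComposition n (specialClose π) := by
  obtain ⟨N, hzero, hsum⟩ := hn
  have h₀ := hzero N le_rfl
  have h₁ := hzero (N + 1) (by omega)
  refine ⟨N + 1, fun i hi => ?_, ?_⟩
  · obtain ⟨p, rfl⟩ : ∃ p, i = p + 1 := ⟨i - 1, by omega⟩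
    have := hzero (p + 1) (by omega)
    have := hzero (p + 2) (by omega)
    simp only [specialClose]
    split_ifs <;> omega
  · rw [psum_specialClose hπ, psum_succ]
    simp only [specialExcess]
    split_ifs <;> omega

end SpecialClose

lemma interleave_scRho_scSigma {ρ σ : ℕ → ℕ} (hρ : IsPartition ρ) :
    interleave (scRho ρ σ) (scSigma ρ σ) = specialClose (interleave ρ σ) := by
  funext j
  obtain ⟨i, rfl | rfl⟩ := Nat.even_or_odd' j
  · rw [interleave_two_mul]
    cases i with
    | zero => simp [scRho, specialClose, interleave]
    | succ i =>
      rw [mul_add_one, show 2 * i + 2 = 2 * i + 1 + 1 by ring, specialClose,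
        show 2 * i + 1 + 2 = 2 * (i + 1) + 1 by ring, interleave_two_mul_add_one,
        interleave_two_mul_add_one, interleave_two_mul_add_two]
      simp only [scRho, show (2 * i + 1 + 1) % 2 = 0 by omega,
        show (2 * (i + 1) + 1) % 2 = 1 by omega]
      split_ifs <;> omega
  · -- the two definitions test the pairs around `σ i` in opposite orders, but both tests
    -- passing would mean `σ i < ρ (i + 1) ≤ ρ i < σ i - 1`
    have := hρ i
    rw [interleave_two_mul_add_one, specialClose, interleave_two_mul, interleave_two_mul_add_one,
      interleave_two_mul_add_two]
    simp only [scSigma, show (2 * i + 2) % 2 = 0 by omega, show (2 * i + 1) % 2 = 1 by omega]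
    split_ifs <;> omega

/-- existence, explicit construction, and uniqueness of the
special closure `(ρ;σ)°`: the minimum special bipartition dominating
`(ρ;σ)`. -/
theorem special_closure (n : ℕ) (ρ σ : ℕ → ℕ) (h : IsBipartition n ρ σ) :
    (IsBipartition n (scRho ρ σ) (scSigma ρ σ) ∧
     QS (scRho ρ σ) (scSigma ρ σ) ∧
     BiLE ρ σ (scRho ρ σ) (scSigma ρ σ) ∧
     (∀ τ υ : ℕ → ℕ, IsBipartition n τ υ → QS τ υ → BiLE ρ σ τ υ →
        BiLE (scRho ρ σ) (scSigma ρ σ) τ υ)) ∧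
    (∀ μ ν : ℕ → ℕ, IsBipartition n μ ν → QS μ ν → BiLE ρ σ μ ν →
      (∀ τ υ : ℕ → ℕ, IsBipartition n τ υ → QS τ υ → BiLE ρ σ τ υ →
        BiLE μ ν τ υ) →
      (∀ i, μ i = scRho ρ σ i) ∧ (∀ i, ν i = scSigma ρ σ i)) := by
  obtain ⟨hρ, hσ, hn⟩ := h
  have hπ := isQuasiPartition_interleave_iff.2 ⟨hρ, hσ⟩
  have hclose := interleave_scRho_scSigma (σ := σ) hρ
  obtain ⟨hρ', hσ'⟩ :=
    isQuasiPartition_interleave_iff.1 (hclose ▸ specialClose_isQuasiPartition hπ)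
  have hbip : IsBipartition n (scRho ρ σ) (scSigma ρ σ) :=
    ⟨hρ', hσ', hclose ▸ isComposition_specialClose hπ hn⟩
  have hQS : QS (scRho ρ σ) (scSigma ρ σ) :=
    isSpecialSeq_interleave_iff.1 (hclose ▸ specialClose_isSpecialSeq hπ)
  have hle : BiLE ρ σ (scRho ρ σ) (scSigma ρ σ) := by
    rw [BiLE, hclose]
    exact specialClose_dominates hπ
  have hmin (τ υ : ℕ → ℕ) (_ : IsBipartition n τ υ) (hτυ : QS τ υ) (hle : BiLE ρ σ τ υ) :
      BiLE (scRho ρ σ) (scSigma ρ σ) τ υ := by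
    rw [BiLE, hclose]
    exact dominates_specialClose_of_dominates hπ (isSpecialSeq_interleave_iff.2 hτυ) hle
  refine ⟨⟨hbip, hQS, hle, hmin⟩, fun μ ν hμν hQμν hleμν hminμν => ?_⟩
  obtain ⟨rfl, rfl⟩ := interleave_injective
    (Dominates.antisymm (hmin μ ν hμν hQμν hleμν) (hminμν _ _ hbip hQS hle))
  exact ⟨fun _ => rfl, fun _ => rfl⟩
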